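/- Let W ∈ ℂ^{m+1} be nonzero, let r ∈ (0, π/2), and set t = 1/tan(r/2). Then for every nonzero Z ∈ ℂ^{m+1} with φ_W(Z) ≤ cos² r one has φ_W(Θ_{t,W} Z) ≤ 1/5, equivalently (φ_W(Θ_{t,W} Z) + 1)^{-1} − 2/3 ≥ 1/6; consequently the function ψ̄_{r,W} satisfies ψ̄_{r,W}(Z) ≥ 1/6 whenever φ_W(Z) ≤ cos² r (i.e. outside the Fubini–Study ball B_{[W]}(r)). -/

import Mathlib

open Real

/-- `phiW W Z = |⟨Z,W⟩|² / (|Z|²|W|²)`, the squared cosine of the Fubini–Study distance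
between the lines `[Z]` and `[W]` in `ℂP^m`.  Here `inner W Z` is the Hermitian product,
linear in `Z`. -/
noncomputable def phiW {m : ℕ} (W Z : EuclideanSpace ℂ (Fin (m + 1))) : ℝ :=
  ‖(inner ℂ W Z : ℂ)‖ ^ 2 / (‖Z‖ ^ 2 * ‖W‖ ^ 2)

/-- `ThetaW t W` is the ℂ-linear map `Z ↦ tZ + (1-t)(⟨Z,W⟩/|W|²)W`, i.e. the identity on
the line `ℂW` and multiplication by `t` on its orthogonal complement. -/
noncomputable def ThetaW {m : ℕ} (t : ℝ) (W Z : EuclideanSpace ℂ (Fin (m + 1))) :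
    EuclideanSpace ℂ (Fin (m + 1)) :=
  (t : ℂ) • Z + (((1 : ℂ) - (t : ℂ)) * ((inner ℂ W Z : ℂ) / ((‖W‖ : ℂ) ^ 2))) • W

/-- The cut-off function `ψ̄_{r,W}` supported outside the Fubini–Study ball `B_{[W]}(r/2)`:
`ψ̄_{r,W}(Z) = (φ_W(Θ_{t,W} Z) + 1)⁻¹ − 2/3` with `t = 1/tan(r/2)` if `φ_W(Z) ≤ cos²(r/2)`,
and `0` otherwise. -/
noncomputable def psibar {m : ℕ} (r : ℝ) (W Z : EuclideanSpace ℂ (Fin (m + 1))) : ℝ :=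
  if phiW W Z ≤ (Real.cos (r / 2)) ^ 2 then
    (phiW W (ThetaW (1 / Real.tan (r / 2)) W Z) + 1)⁻¹ - 2 / 3
  else 0

set_option maxHeartbeats 1000000 in
/-- For `r ∈ (0, π/2)` and `t = 1/tan(r/2)`: if `φ_W(Z) ≤ cos² r` (i.e. `[Z] ∉ B_{[W]}(r)`),
then `φ_W(Θ_{t,W} Z) ≤ 1/5`, equivalently `(φ_W(Θ_{t,W} Z) + 1)⁻¹ − 2/3 ≥ 1/6`, and hence
`ψ̄_{r,W}(Z) ≥ 1/6`. -/
theorem psibar_lower_bound {m : ℕ} (W : EuclideanSpace ℂ (Fin (m + 1))) (hW : W ≠ 0)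
    (r : ℝ) (hr : r ∈ Set.Ioo 0 (Real.pi / 2))
    (Z : EuclideanSpace ℂ (Fin (m + 1))) (hZ : Z ≠ 0)
    (h : phiW W Z ≤ (Real.cos r) ^ 2) :
    phiW W (ThetaW (1 / Real.tan (r / 2)) W Z) ≤ 1 / 5 ∧
    1 / 6 ≤ (phiW W (ThetaW (1 / Real.tan (r / 2)) W Z) + 1)⁻¹ - 2 / 3 ∧
    1 / 6 ≤ psibar r W Z := by
  obtain ⟨hr0, hr2⟩ := hr
  have hπ := Real.pi_pos
  -- trigonometric preliminaries
  have hτ0 : 0 < Real.tan (r / 2) :=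
    Real.tan_pos_of_pos_of_lt_pi_div_two (by linarith) (by linarith)
  have hτ1 : Real.tan (r / 2) < 1 := by
    have h4 : Real.tan (r / 2) < Real.tan (Real.pi / 4) :=
      Real.tan_lt_tan_of_nonneg_of_lt_pi_div_two (by linarith) (by linarith) (by linarith)
    rwa [Real.tan_pi_div_four] at h4
  set t : ℝ := 1 / Real.tan (r / 2) with ht
  have ht0 : 0 < t := by positivity
  have ht1 : 1 < t := one_lt_one_div hτ0 hτ1
  have hsin : 0 < Real.sin r := Real.sin_pos_of_pos_of_lt_pi hr0 (by linarith)
  have hcos : 0 < Real.cos r := Real.cos_pos_of_mem_Ioo ⟨by linarith, hr2⟩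
  have htanr : Real.tan r = 2 * Real.tan (r / 2) / (1 - Real.tan (r / 2) ^ 2) := by
    have h2 := Real.tan_two_mul (x := r / 2)
    rwa [show 2 * (r / 2) = r by ring] at h2
  have hst : Real.sin r * (1 - Real.tan (r / 2) ^ 2) = 2 * Real.tan (r / 2) * Real.cos r := by
    have hτ2 : (1 : ℝ) - Real.tan (r / 2) ^ 2 ≠ 0 := by nlinarith
    have h1 : Real.sin r = Real.tan r * Real.cos r := by
      rw [Real.tan_eq_sin_div_cos, div_mul_cancel₀ _ hcos.ne']
    rw [h1, htanr, div_mul_eq_mul_div, div_mul_eq_mul_div, div_eq_iff hτ2]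
  have hkey : 2 * Real.cos r ≤ t * Real.sin r := by
    have h1 : 2 * Real.cos r * Real.tan (r / 2) ≤ Real.sin r := by nlinarith
    rw [ht]
    rw [div_mul_eq_mul_div, le_div_iff₀ hτ0]
    linarith
  have ht2 : 4 * Real.cos r ^ 2 ≤ t ^ 2 * Real.sin r ^ 2 := by nlinarith
  -- geometric preliminaries
  have hWn : 0 < ‖W‖ := norm_pos_iff.mpr hW
  set N : ℝ := ‖W‖ ^ 2 with hNdef
  have hN0 : 0 < N := by positivity
  set a : ℂ := (inner ℂ W Z : ℂ) with ha
  have hNC : ((‖W‖ : ℂ)) ^ 2 = (N : ℂ) := by rw [hNdef]; push_cast; ring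
  have hNC0 : (N : ℂ) ≠ 0 := by exact_mod_cast hN0.ne'
  set Zp : EuclideanSpace ℂ (Fin (m + 1)) := Z - (a / (N : ℂ)) • W with hZp
  have hWW : (inner ℂ W W : ℂ) = (N : ℂ) := by
    rw [inner_self_eq_norm_sq_to_K, hNdef]
    norm_cast
  have hperp : (inner ℂ W Zp : ℂ) = 0 := by
    rw [hZp, inner_sub_right, inner_smul_right, hWW, ← ha]
    field_simp
    ring
  have hperp' : (inner ℂ Zp W : ℂ) = 0 := by
    rw [← inner_conj_symm, hperp, map_zero]
  set A : ℝ := ‖a‖ ^ 2 with hA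
  set V : ℝ := ‖Zp‖ ^ 2 with hV
  have hA0 : 0 ≤ A := by positivity
  have hV0 : 0 ≤ V := by positivity
  -- norms of the pieces
  have hnsw : ‖(a / (N : ℂ)) • W‖ ^ 2 = A / N := by
    rw [norm_smul, mul_pow, norm_div, div_pow, hA]
    rw [Complex.norm_real, Real.norm_eq_abs, abs_of_pos hN0]
    rw [← hNdef]
    field_simp
  have hntz : ‖(t : ℂ) • Zp‖ ^ 2 = t ^ 2 * V := by
    rw [norm_smul, mul_pow, hV, Complex.norm_real, Real.norm_eq_abs, abs_of_pos ht0]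
  -- Pythagoras for Z
  have hZdec : Z = Zp + (a / (N : ℂ)) • W := by rw [hZp]; abel
  have hnZ : ‖Z‖ ^ 2 = V + A / N := by
    have hp := norm_add_sq_eq_norm_sq_add_norm_sq_of_inner_eq_zero Zp ((a / (N : ℂ)) • W)
      (by rw [inner_smul_right, hperp']; ring)
    rw [← hZdec] at hp
    calc ‖Z‖ ^ 2 = ‖Z‖ * ‖Z‖ := pow_two _
      _ = ‖Zp‖ * ‖Zp‖ + ‖(a / (N : ℂ)) • W‖ * ‖(a / (N : ℂ)) • W‖ := hp
      _ = V + A / N := by rw [← pow_two, ← pow_two, ← hV, hnsw]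
  -- decomposition of ThetaW
  have hTheta : ThetaW t W Z = (t : ℂ) • Zp + (a / (N : ℂ)) • W := by
    rw [ThetaW, hNC, ← ha, hZp]
    module
  have hnT : ‖ThetaW t W Z‖ ^ 2 = t ^ 2 * V + A / N := by
    have hp := norm_add_sq_eq_norm_sq_add_norm_sq_of_inner_eq_zero
      ((t : ℂ) • Zp) ((a / (N : ℂ)) • W)
      (by rw [inner_smul_right, inner_smul_left, hperp']; ring)
    rw [← hTheta] at hp
    calc ‖ThetaW t W Z‖ ^ 2 = ‖ThetaW t W Z‖ * ‖ThetaW t W Z‖ := pow_two _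
      _ = t ^ 2 * V + A / N := by rw [hp, ← pow_two, ← pow_two, hntz, hnsw]
  have hinT : (inner ℂ W (ThetaW t W Z) : ℂ) = a := by
    rw [hTheta, inner_add_right, inner_smul_right, inner_smul_right, hperp, hWW]
    field_simp
    ring
  -- express the two phi values
  have hphiT : phiW W (ThetaW t W Z) = A / (t ^ 2 * (V * N) + A) := by
    rw [phiW, hinT, hnT, ← hNdef, ← hA,
      show (t ^ 2 * V + A / N) * N = t ^ 2 * (V * N) + A by
        rw [add_mul, div_mul_cancel₀ _ hN0.ne']; ring]
  have hphiZ : phiW W Z = A / (V * N + A) := by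
    rw [phiW, ← ha, hnZ, ← hNdef, ← hA,
      show (V + A / N) * N = V * N + A by
        rw [add_mul, div_mul_cancel₀ _ hN0.ne']]
  rw [hphiZ] at h
  -- positivity of denominators
  have hnZ2 : 0 < V + A / N := by
    rw [← hnZ]; exact pow_pos (norm_pos_iff.mpr hZ) 2
  have hden1 : 0 < V * N + A := by
    have h1 := mul_pos hnZ2 hN0
    rw [add_mul, div_mul_cancel₀ _ hN0.ne'] at h1
    exact h1
  have ht2' : (1 : ℝ) ≤ t ^ 2 := by nlinarith
  have hdenT : 0 < t ^ 2 * (V * N) + A := by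
    have h2 : V * N ≤ t ^ 2 * (V * N) := le_mul_of_one_le_left (mul_nonneg hV0 hN0.le) ht2'
    linarith
  -- the main inequality 4A ≤ t² V N
  have hAs : A * Real.sin r ^ 2 ≤ Real.cos r ^ 2 * (V * N) := by
    have h1 : A ≤ Real.cos r ^ 2 * (V * N + A) := by
      rw [div_le_iff₀ hden1] at h
      linarith
    have h2 : Real.sin r ^ 2 = 1 - Real.cos r ^ 2 := by
      have := Real.sin_sq_add_cos_sq r
      linarith
    nlinarith
  have h4A : 4 * A ≤ t ^ 2 * (V * N) := by
    have h1 : 4 * (A * Real.sin r ^ 2) ≤ 4 * (Real.cos r ^ 2 * (V * N)) := by linarith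
    have h2 : (4 * Real.cos r ^ 2) * (V * N) ≤ (t ^ 2 * Real.sin r ^ 2) * (V * N) :=
      mul_le_mul_of_nonneg_right ht2 (mul_nonneg hV0 hN0.le)
    have hs2 : 0 < Real.sin r ^ 2 := by positivity
    nlinarith
  -- conclusion 1
  have goal1 : phiW W (ThetaW t W Z) ≤ 1 / 5 := by
    rw [hphiT, div_le_iff₀ hdenT]
    linarith
  refine ⟨goal1, ?_, ?_⟩
  · have hx0 : 0 ≤ phiW W (ThetaW t W Z) := by
      rw [hphiT]; positivity
    have hx1 : 0 < phiW W (ThetaW t W Z) + 1 := by linarith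
    have h65 : phiW W (ThetaW t W Z) + 1 ≤ 6 / 5 := by linarith
    have := inv_anti₀ hx1 h65
    have h56 : ((6 : ℝ) / 5)⁻¹ = 5 / 6 := by norm_num
    linarith [h56 ▸ this]
  · have hcond : phiW W Z ≤ Real.cos (r / 2) ^ 2 := by
      have hcc : Real.cos r ≤ Real.cos (r / 2) :=
        Real.cos_le_cos_of_nonneg_of_le_pi (by linarith) (by linarith) (by linarith)
      have := pow_le_pow_left₀ hcos.le hcc 2
      linarith [hphiZ ▸ h]
    rw [psibar, if_pos hcond]
    have hx0 : 0 ≤ phiW W (ThetaW t W Z) := by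
      rw [hphiT]; positivity
    have hx1 : 0 < phiW W (ThetaW t W Z) + 1 := by linarith
    have h65 : phiW W (ThetaW t W Z) + 1 ≤ 6 / 5 := by linarith [goal1]
    have := inv_anti₀ hx1 h65
    have h56 : ((6 : ℝ) / 5)⁻¹ = 5 / 6 := by norm_num
    linarith [h56 ▸ this]
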